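/- Let E = A ⋈ V be a bicrossed product of perm algebras, identify A with A ⋈ {0}, and let V' be any perm subalgebra complement of A in E (E = A ⊕ V' as vector spaces). Write v = α(v) + β(v) for v ∈ V with α : V → A, β : V → V' the components of the decomposition E = A ⊕ V'. Then −α is a deformation map of the matched pair (A, V, ⇀, ↼, ⊳, ⊲), and β : V_{−α} → V' is an isomorphism of perm algebras, where V_{−α} has multiplication v1·_{−α}v2 = v1·v2 − α(v1)⇀v2 − v1↼α(v2). -/

import Mathlib

/-- The bicrossed-product multiplication on `A × V` attached to `(⇀, ↼, ⊳, ⊲)`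
(here `l = ⇀`, `r = ↼`, `s = ⊳`, `t = ⊲`). -/
def bicrossedMul {k A V : Type*} [Field k] [AddCommGroup A] [Module k A]
    [AddCommGroup V] [Module k V]
    (mulA : A →ₗ[k] A →ₗ[k] A) (mulV : V →ₗ[k] V →ₗ[k] V)
    (l : A →ₗ[k] V →ₗ[k] V) (r : V →ₗ[k] A →ₗ[k] V)
    (s : V →ₗ[k] A →ₗ[k] A) (t : A →ₗ[k] V →ₗ[k] A) :
    A × V → A × V → A × V :=
  fun p q =>
    (mulA p.1 q.1 + s p.2 q.1 + t p.1 q.2, mulV p.2 q.2 + l p.1 q.2 + r p.2 q.1)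

/-!
A linear map `ψ : V → A` is a deformation map exactly when its graph `{(ψ v, v)}` is closed
under the bicrossed product, i.e. when the `A`-component of `(ψ v₁, v₁)(ψ v₂, v₂)` is `ψ` of its
`V`-component; that `V`-component is the deformed product `v₁ ·_ψ v₂`. The decomposition
`v = α(v) + β(v)` says `β(v) = (-α(v), v)`, so `V'` is the graph of `-α`, closed under
multiplication as a subalgebra. Since `V' ∩ A = 0`, a vector of `V'` is determined by its
`V`-component; hence `β` is bijective, and `β(v₁ ·_{-α} v₂) = β(v₁)β(v₂)` because both sides
lie in `V'` with `V`-component `v₁ ·_{-α} v₂`.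
-/

theorem Submodule.eq_of_snd_eq_of_prod_top_bot_inf_eq_bot {k A V : Type*} [Ring k]
    [AddCommGroup A] [Module k A] [AddCommGroup V] [Module k V] {W : Submodule k (A × V)}
    (hW : Submodule.prod ⊤ ⊥ ⊓ W = ⊥) {x y : A × V} (hx : x ∈ W) (hy : y ∈ W)
    (h : x.2 = y.2) : x = y := by
  have hxy : x - y ∈ Submodule.prod ⊤ ⊥ ⊓ W :=
    ⟨by simp [h], sub_mem hx hy⟩
  rwa [hW, Submodule.mem_bot, sub_eq_zero] at hxy

section BicrossedProduct

variable {k A V : Type*} [Field k] [AddCommGroup A] [Module k A] [AddCommGroup V] [Module k V]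
  (mulA : A →ₗ[k] A →ₗ[k] A) (mulV : V →ₗ[k] V →ₗ[k] V)
  (l : A →ₗ[k] V →ₗ[k] V) (r : V →ₗ[k] A →ₗ[k] V)
  (s : V →ₗ[k] A →ₗ[k] A) (t : A →ₗ[k] V →ₗ[k] A)

theorem snd_bicrossedMul_graph (ψ : V →ₗ[k] A) (v₁ v₂ : V) :
    (bicrossedMul mulA mulV l r s t (ψ v₁, v₁) (ψ v₂, v₂)).2 =
      mulV v₁ v₂ + l (ψ v₁) v₂ + r v₁ (ψ v₂) :=
  rfl

theorem deformation_eq_of_graph_mul_mem_graph (ψ : V →ₗ[k] A)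
    (hψ : ∀ v₁ v₂ : V, (bicrossedMul mulA mulV l r s t (ψ v₁, v₁) (ψ v₂, v₂)).1 =
      ψ (bicrossedMul mulA mulV l r s t (ψ v₁, v₁) (ψ v₂, v₂)).2)
    (v₁ v₂ : V) :
    ψ (mulV v₁ v₂) - mulA (ψ v₁) (ψ v₂) =
      s v₁ (ψ v₂) + t (ψ v₁) v₂ - ψ (l (ψ v₁) v₂) - ψ (r v₁ (ψ v₂)) := by
  have h := hψ v₁ v₂
  simp only [bicrossedMul, map_add] at h
  linear_combination (norm := module) -h

end BicrossedProduct

theorem complement_is_deformation_general {k A V : Type*} [Field k] [AddCommGroup A] [Module k A]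
    [AddCommGroup V] [Module k V]
    (mulA : A →ₗ[k] A →ₗ[k] A)
    (mulV : V →ₗ[k] V →ₗ[k] V)
    (l : A →ₗ[k] V →ₗ[k] V) (r : V →ₗ[k] A →ₗ[k] V)
    (s : V →ₗ[k] A →ₗ[k] A) (t : A →ₗ[k] V →ₗ[k] A)
    -- V' is a perm subalgebra of E = A ⋈ V
    (V' : Submodule k (A × V))
    (hV' : ∀ x ∈ V', ∀ y ∈ V', bicrossedMul mulA mulV l r s t x y ∈ V')
    -- V' is a complement of A ≅ A ⋈ {0} in E
    (hcompl : Submodule.prod (⊤ : Submodule k A) (⊥ : Submodule k V) ⊔ V' = ⊤ ∧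
              Submodule.prod (⊤ : Submodule k A) (⊥ : Submodule k V) ⊓ V' = ⊥)
    -- the components of the decomposition v = α(v) + β(v)
    (α : V →ₗ[k] A) (β : V →ₗ[k] V')
    (hdec : ∀ v : V, ((0 : A), v) = ((α v, (0 : V)) : A × V) + ((β v : A × V))) :
    -- (1) −α is a deformation map of the matched pair
    (∀ v1 v2 : V,
      (-α) (mulV v1 v2) - mulA ((-α) v1) ((-α) v2) =
        s v1 ((-α) v2) + t ((-α) v1) v2 -
          (-α) (l ((-α) v1) v2) - (-α) (r v1 ((-α) v2))) ∧
    -- (2) β : V_{−α} → V' is an isomorphism of perm algebras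
    Function.Bijective β ∧
    (∀ v1 v2 : V,
      ((β (mulV v1 v2 + l ((-α) v1) v2 + r v1 ((-α) v2)) : A × V)) =
        bicrossedMul mulA mulV l r s t ((β v1 : A × V)) ((β v2 : A × V))) := by
  have hβ (v : V) : (β v : A × V) = ((-α) v, v) := by
    rw [← sub_eq_of_eq_add' (hdec v), Prod.mk_sub_mk, zero_sub, sub_zero, LinearMap.neg_apply]
  have hsnd {x y : A × V} : x ∈ V' → y ∈ V' → x.2 = y.2 → x = y :=
    Submodule.eq_of_snd_eq_of_prod_top_bot_inf_eq_bot hcompl.2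
  have hmul (v₁ v₂ : V) : (β (mulV v₁ v₂ + l ((-α) v₁) v₂ + r v₁ ((-α) v₂)) : A × V) =
      bicrossedMul mulA mulV l r s t (β v₁) (β v₂) := by
    refine hsnd (β _).2 (hV' _ (β v₁).2 _ (β v₂).2) ?_
    rw [hβ, hβ, hβ, snd_bicrossedMul_graph]
  refine ⟨deformation_eq_of_graph_mul_mem_graph mulA mulV l r s t (-α) fun v₁ v₂ => ?_,
    ⟨?_, ?_⟩, hmul⟩
  · have h := congrArg Prod.fst (hmul v₁ v₂)
    rw [hβ, hβ, hβ, ← snd_bicrossedMul_graph mulA mulV l r s t (-α)] at h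
    exact h.symm
  · intro v₁ v₂ h
    simpa [hβ] using congrArg (fun x : V' => (x : A × V).2) h
  · intro x
    exact ⟨(x : A × V).2, Subtype.ext (hsnd (β _).2 x.2 (by rw [hβ]))⟩

/-- Let `E = A ⋈ V` be a bicrossed product of perm algebras, and let `V'` be a perm
subalgebra complement of `A` (identified with `A ⋈ {0}`) in `E`.  Decompose each
`v ∈ V ⊆ E` as `v = α(v) + β(v)` with `α(v) ∈ A`, `β(v) ∈ V'`.  Then `−α` is a
deformation map of the matched pair, and `β : V_{−α} → V'` is an isomorphism of perm
algebras, where `V_{−α}` carries the product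
`v₁ ·_{−α} v₂ = v₁·v₂ + (−α)(v₁)⇀v₂ + v₁↼(−α)(v₂)`. -/
theorem complement_is_deformation {k A V : Type*} [Field k] [AddCommGroup A] [Module k A]
    [AddCommGroup V] [Module k V]
    (mulA : A →ₗ[k] A →ₗ[k] A)
    (hpA1 : ∀ x y z, mulA (mulA x y) z = mulA x (mulA y z))
    (hpA2 : ∀ x y z, mulA x (mulA y z) = mulA x (mulA z y))
    (mulV : V →ₗ[k] V →ₗ[k] V)
    (hpV1 : ∀ x y z, mulV (mulV x y) z = mulV x (mulV y z))
    (hpV2 : ∀ x y z, mulV x (mulV y z) = mulV x (mulV z y))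
    (l : A →ₗ[k] V →ₗ[k] V) (r : V →ₗ[k] A →ₗ[k] V)
    (s : V →ₗ[k] A →ₗ[k] A) (t : A →ₗ[k] V →ₗ[k] A)
    -- matched pair: the bicrossed product is a perm algebra
    (hmp : ∀ x y z : A × V,
      bicrossedMul mulA mulV l r s t (bicrossedMul mulA mulV l r s t x y) z =
        bicrossedMul mulA mulV l r s t x (bicrossedMul mulA mulV l r s t y z) ∧
      bicrossedMul mulA mulV l r s t x (bicrossedMul mulA mulV l r s t y z) =
        bicrossedMul mulA mulV l r s t x (bicrossedMul mulA mulV l r s t z y))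
    -- V' is a perm subalgebra of E = A ⋈ V
    (V' : Submodule k (A × V))
    (hV' : ∀ x ∈ V', ∀ y ∈ V', bicrossedMul mulA mulV l r s t x y ∈ V')
    -- V' is a complement of A ≅ A ⋈ {0} in E
    (hcompl : Submodule.prod (⊤ : Submodule k A) (⊥ : Submodule k V) ⊔ V' = ⊤ ∧
              Submodule.prod (⊤ : Submodule k A) (⊥ : Submodule k V) ⊓ V' = ⊥)
    -- the components of the decomposition v = α(v) + β(v)
    (α : V →ₗ[k] A) (β : V →ₗ[k] V')
    (hdec : ∀ v : V, ((0 : A), v) = ((α v, (0 : V)) : A × V) + ((β v : A × V))) :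
    -- (1) −α is a deformation map of the matched pair
    (∀ v1 v2 : V,
      (-α) (mulV v1 v2) - mulA ((-α) v1) ((-α) v2) =
        s v1 ((-α) v2) + t ((-α) v1) v2 -
          (-α) (l ((-α) v1) v2) - (-α) (r v1 ((-α) v2))) ∧
    -- (2) β : V_{−α} → V' is an isomorphism of perm algebras
    Function.Bijective β ∧
    (∀ v1 v2 : V,
      ((β (mulV v1 v2 + l ((-α) v1) v2 + r v1 ((-α) v2)) : A × V)) =
        bicrossedMul mulA mulV l r s t ((β v1 : A × V)) ((β v2 : A × V))) :=
  complement_is_deformation_general mulA mulV l r s t V' hV' hcompl α β hdec
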